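/- arXiv:1404.1115 — 2 statements merged into one kernel-verified Lean document; each statement's English description precedes it below -/
import Mathlib

section
/- Let p ≥ 2 and work in R = ℚ[y₁,…,y_p, z]. Let I ⊆ R be the ideal generated by the elementary symmetric polynomials e₁,…,e_{p+1} of the p+1 variables y₁,…,y_p, z. Then e₂(y₁,…,y_p) = Σ_{1≤i<j≤p} y_i y_j does not belong to I. -/
open MvPolynomial

/-!
Write `z` for the last variable. Since `e₂(y) = e₂ - z e₁ + z²`, it suffices to show `z² ∉ I`.
Fix a primitive `(p+1)`-th root of unity `ζ` and substitute `ζ^i T` for the `i`-th variable.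
As `e_k` is homogeneous, it goes to `e_k(1, ζ, …, ζ^p) T^k`, and `1, ζ, …, ζ^p` are the roots of
`T^{p+1} - 1`, so the coefficient vanishes for `k ≤ p`: the image of `I` lies in `(T^{p+1})`.
But `z²` goes to the nonzero monomial `ζ^{2p} T²`.
-/

namespace Multiset

theorem esymm_cons_succ {R : Type*} [CommSemiring R] (a : R) (s : Multiset R) (k : ℕ) :
    (a ::ₘ s).esymm (k + 1) = s.esymm (k + 1) + a * s.esymm k := by
  simp only [esymm, powersetCard_cons, map_add, sum_add, map_map, Function.comp_def, prod_cons,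
    sum_map_mul_left]

end Multiset

theorem IsPrimitiveRoot.esymm_map_pow_eq_zero {K : Type*} [CommRing K] [IsDomain K] {ζ : K}
    {n : ℕ} (hζ : IsPrimitiveRoot ζ n) {k : ℕ} (hk₀ : 0 < k) (hkn : k < n) :
    ((Multiset.range n).map (ζ ^ ·)).esymm k = 0 := by
  have hroots : (Polynomial.X ^ n - Polynomial.C 1 : Polynomial K).roots
      = (Multiset.range n).map (ζ ^ ·) :=
    (hζ.nthRoots_eq (one_pow n)).trans (by simp)
  have hdeg : (Polynomial.X ^ n - Polynomial.C 1 : Polynomial K).natDegree = n :=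
    Polynomial.natDegree_X_pow_sub_C
  have hcoeff := Polynomial.coeff_eq_esymm_roots_of_card (k := n - k)
    (by rw [hdeg, hroots, Multiset.card_map, Multiset.card_range]) (by omega)
  rw [hroots, hdeg, (Polynomial.monic_X_pow_sub_C 1 (by omega)).leadingCoeff,
    Nat.sub_sub_self hkn.le] at hcoeff
  simpa [Polynomial.coeff_X_pow, Polynomial.coeff_one, show n - k ≠ n by omega,
    show n - k ≠ 0 by omega] using hcoeff.symm

namespace MvPolynomial

variable {σ R : Type*}

theorem isHomogeneous_esymm [Fintype σ] [CommSemiring R] (k : ℕ) :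
    (esymm σ R k).IsHomogeneous k := by
  rw [esymm_eq_sum_monomial]
  refine IsHomogeneous.sum _ _ _ fun s hs => isHomogeneous_monomial _ ?_
  simp [(Finset.mem_powersetCard.1 hs).2]

theorem aeval_C_mul_X_of_isHomogeneous {K : Type*} [CommSemiring R] [CommSemiring K]
    [Algebra R K] {φ : MvPolynomial σ R} {m : ℕ} (hφ : φ.IsHomogeneous m) (a : σ → K) :
    aeval (fun i => Polynomial.C (a i) * Polynomial.X) φ
      = Polynomial.C (aeval a φ) * Polynomial.X ^ m := by
  conv_lhs => rw [φ.as_sum]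
  conv_rhs => rw [φ.as_sum]
  simp only [map_sum, Finset.sum_mul, aeval_monomial]
  refine Finset.sum_congr rfl fun d hd => ?_
  have hdeg : d.degree = m := by
    rw [Finsupp.degree_eq_weight_one]; exact hφ (mem_support_iff.1 hd)
  have hX : (d.prod fun _ k => (Polynomial.X : Polynomial K) ^ k) = Polynomial.X ^ m := by
    rw [Finsupp.prod, Finset.prod_pow_eq_pow_sum, ← hdeg, Finsupp.degree_apply]
  simp only [mul_pow, Finsupp.prod_mul, hX, map_mul, map_finsuppProd, map_pow,
    Polynomial.algebraMap_apply, mul_assoc]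

theorem esymm_succ_eq_rename_castSucc [CommSemiring R] (n k : ℕ) :
    esymm (Fin (n + 1)) R (k + 1) = rename Fin.castSucc (esymm (Fin n) R (k + 1))
      + X (Fin.last n) * rename Fin.castSucc (esymm (Fin n) R k) := by
  have hrename (j : ℕ) : rename Fin.castSucc (esymm (Fin n) R j)
      = (Finset.univ.val.map fun i : Fin n => X i.castSucc).esymm j := by
    rw [← aeval_X_left_apply (rename _ _), aeval_rename, aeval_esymm_eq_multiset_esymm]
    rfl
  rw [hrename, hrename, esymm_eq_multiset_esymm, Fin.univ_castSuccEmb, Finset.cons_val,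
    Finset.map_val, Multiset.map_cons, Multiset.map_map, Multiset.esymm_cons_succ]
  rfl

section RootsOfUnity

variable [Fintype σ] [CommSemiring R] {K : Type*} [CommRing K] [IsDomain K] [Algebra R K] {ζ : K}

theorem span_esymm_le_comap_span_X_pow (hζ : IsPrimitiveRoot ζ (Fintype.card σ)) :
    Ideal.span (Set.range fun k : ℕ => esymm σ R (k + 1)) ≤
      (Ideal.span {(Polynomial.X : Polynomial K) ^ Fintype.card σ}).comap
        (aeval (R := R) fun i => Polynomial.C (ζ ^ (Fintype.equivFin σ i : ℕ)) * Polynomial.X) := by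
  refine Ideal.span_le.2 ?_
  rintro _ ⟨k, rfl⟩
  rw [SetLike.mem_coe, Ideal.mem_comap, aeval_C_mul_X_of_isHomogeneous (isHomogeneous_esymm _),
    aeval_esymm_eq_multiset_esymm, Ideal.mem_span_singleton]
  have hvals : Finset.univ.val.map (fun i => ζ ^ (Fintype.equivFin σ i : ℕ))
      = (Multiset.range (Fintype.card σ)).map (ζ ^ ·) := by
    rw [← Multiset.map_univ_val_equiv (Fintype.equivFin σ).symm, Multiset.map_map,
      ← Multiset.coe_range, ← List.map_coe_finRange_eq_range, Fin.univ_val_map, Multiset.map_coe,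
      List.ofFn_eq_map, List.map_map]
    simp [Function.comp_def]
  rcases lt_or_ge (k + 1) (Fintype.card σ) with hk | hk
  · simp [hvals, hζ.esymm_map_pow_eq_zero k.succ_pos hk]
  · exact dvd_mul_of_dvd_right (pow_dvd_pow _ hk) _

theorem X_pow_notMem_span_esymm (hζ : IsPrimitiveRoot ζ (Fintype.card σ)) {k : ℕ}
    (hk : k < Fintype.card σ) (i : σ) :
    X i ^ k ∉ Ideal.span (Set.range fun j : ℕ => esymm σ R (j + 1)) := by
  intro hmem
  have hdvd := span_esymm_le_comap_span_X_pow hζ hmem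
  rw [Ideal.mem_comap, map_pow, aeval_X, Ideal.mem_span_singleton, Polynomial.X_pow_dvd_iff] at hdvd
  have hζ₀ : ζ ≠ 0 := hζ.ne_zero (by omega)
  simpa [mul_pow, ← map_pow, Polynomial.coeff_C_mul, hζ₀] using hdvd k hk

end RootsOfUnity

end MvPolynomial

/-- In `ℚ[y₁,…,y_p,z]` (`p ≥ 2`), the polynomial `e₂(y₁,…,y_p)` does not belong
to the ideal generated by the elementary symmetric polynomials `e₁,…,e_{p+1}`
of the `p+1` variables `y₁,…,y_p,z`. -/
theorem esymm_two_not_mem_span (p : ℕ) (hp : 2 ≤ p) :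
    rename (Fin.castSucc : Fin p → Fin (p + 1)) (esymm (Fin p) ℚ 2)
      ∉ Ideal.span (Set.range fun j : Fin (p + 1) =>
          esymm (Fin (p + 1)) ℚ ((j : ℕ) + 1)) := by
  set I := Ideal.span (Set.range fun j : Fin (p + 1) => esymm (Fin (p + 1)) ℚ ((j : ℕ) + 1))
  have hgen (k : ℕ) (hk : k < p + 1) : esymm (Fin (p + 1)) ℚ (k + 1) ∈ I :=
    Ideal.subset_span ⟨⟨k, hk⟩, rfl⟩
  set z : MvPolynomial (Fin (p + 1)) ℚ := X (Fin.last p)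
  have hz : z ^ 2 = rename Fin.castSucc (esymm (Fin p) ℚ 2) - esymm (Fin (p + 1)) ℚ 2
      + z * esymm (Fin (p + 1)) ℚ 1 := by
    rw [esymm_succ_eq_rename_castSucc p 1, esymm_succ_eq_rename_castSucc p 0, esymm_zero,
      map_one]
    ring
  intro hmem
  have hzI : z ^ 2 ∈ I := hz ▸ add_mem (sub_mem hmem (hgen 1 (by omega)))
    (I.mul_mem_left _ (hgen 0 (by omega)))
  refine X_pow_notMem_span_esymm (Complex.isPrimitiveRoot_exp _ (by simp))
    (by rw [Fintype.card_fin]; omega) _ (Ideal.span_mono ?_ hzI)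
  exact Set.range_subset_iff.2 fun j => ⟨j, rfl⟩
end

section
/- In ℚ[y₁,…,y₄], neither the polynomial Σ_{1≤i<j≤4} y_i² y_j² nor the polynomial (7/4)·Σ_{i=1}^4 y_i⁴ + (5/2)·Σ_{1≤i<j≤4} y_i² y_j² belongs to the ideal generated by y₁²+y₂²+y₃²+y₄². -/
/-!
Every element of the ideal generated by `f = Σ yᵢ²` vanishes at each complex zero of `f`, such as
`(1, i, 0, 0)`. At this point `Σ_{i<j} yᵢ²yⱼ²` takes the value `-1` and `Σ yᵢ⁴` the value `2`, so the
second polynomial takes the value `(7/4)·2 - 5/2 = 1`.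
-/

open MvPolynomial

theorem Ideal.notMem_span_singleton_of_apply_ne_zero {R S F : Type*} [CommSemiring R] [Semiring S]
    [FunLike F R S] [RingHomClass F R S] (φ : F) {f p : R} (hf : φ f = 0) (hp : φ p ≠ 0) :
    p ∉ Ideal.span {f} :=
  fun hmem ↦ hp <| (Ideal.span_singleton_le_iff_mem (RingHom.ker φ)).2 hf hmem

theorem Fin.sum_sum_Ioi_four {M : Type*} [AddCommMonoid M] (f : Fin 4 → Fin 4 → M) :
    ∑ i, ∑ j ∈ Finset.Ioi i, f i j = f 0 1 + f 0 2 + f 0 3 + f 1 2 + f 1 3 + f 2 3 := by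
  have h0 : Finset.Ioi (0 : Fin 4) = {1, 2, 3} := by decide
  have h1 : Finset.Ioi (1 : Fin 4) = {2, 3} := by decide
  have h2 : Finset.Ioi (2 : Fin 4) = {3} := by decide
  have h3 : Finset.Ioi (3 : Fin 4) = ∅ := by decide
  simp [Fin.sum_univ_four, h0, h1, h2, h3, add_assoc]

noncomputable def isotropicPoint : Fin 4 → ℂ := ![1, Complex.I, 0, 0]

theorem aeval_isotropicPoint_sum_sq :
    aeval isotropicPoint (∑ i : Fin 4, X i ^ 2 : MvPolynomial (Fin 4) ℚ) = 0 := by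
  simp [Fin.sum_univ_four, isotropicPoint]

theorem aeval_isotropicPoint_sum_pow_four :
    aeval isotropicPoint (∑ i : Fin 4, X i ^ 4 : MvPolynomial (Fin 4) ℚ) = 2 := by
  simp [Fin.sum_univ_four, isotropicPoint]
  norm_num

theorem aeval_isotropicPoint_sum_sq_mul_sq :
    aeval isotropicPoint
      (∑ i : Fin 4, ∑ j ∈ Finset.Ioi i, X i ^ 2 * X j ^ 2 : MvPolynomial (Fin 4) ℚ) = -1 := by
  simp [Fin.sum_sum_Ioi_four, isotropicPoint]

/-- In `ℚ[y₁,…,y₄]`, neither `Σ_{i<j} yᵢ²yⱼ²` nor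
`(7/4)·Σ yᵢ⁴ + (5/2)·Σ_{i<j} yᵢ²yⱼ²` belongs to the ideal generated by
`y₁²+y₂²+y₃²+y₄²`. -/
theorem not_mem_span_sum_squares_F4 :
    ((∑ i : Fin 4, ∑ j ∈ Finset.Ioi i, X i ^ 2 * X j ^ 2 : MvPolynomial (Fin 4) ℚ)
        ∉ Ideal.span {(∑ i : Fin 4, X i ^ 2 : MvPolynomial (Fin 4) ℚ)})
    ∧ ((C (7 / 4 : ℚ) * (∑ i : Fin 4, X i ^ 4)
        + C (5 / 2 : ℚ) * ∑ i : Fin 4, ∑ j ∈ Finset.Ioi i, X i ^ 2 * X j ^ 2)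
        ∉ Ideal.span {(∑ i : Fin 4, X i ^ 2 : MvPolynomial (Fin 4) ℚ)}) := by
  constructor
  · refine Ideal.notMem_span_singleton_of_apply_ne_zero (aeval isotropicPoint)
      aeval_isotropicPoint_sum_sq ?_
    rw [aeval_isotropicPoint_sum_sq_mul_sq]
    norm_num
  · refine Ideal.notMem_span_singleton_of_apply_ne_zero (aeval isotropicPoint)
      aeval_isotropicPoint_sum_sq ?_
    rw [map_add, map_mul, map_mul, aeval_C, aeval_C, aeval_isotropicPoint_sum_pow_four,
      aeval_isotropicPoint_sum_sq_mul_sq]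
    norm_num
end
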